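/- arXiv:2507.06317 — 2 statements merged into one kernel-verified Lean document; each statement's English description precedes it below -/
import Mathlib

section
/- Consider a finite forest (disjoint union of rooted trees) whose nodes are labeled I or II, such that: every node labeled I has at most one child labeled II, every node labeled II has at most two children labeled II, and every path from a root to a leaf contains at most two nodes labeled II. Assume moreover that every root is labeled I. Let S be the number of nodes labeled I and D the number of nodes labeled II. Then D ≤ 3S. -/
/-- A finite labeled forest: `parent v = none` means `v` is a root.
`lab v = true` means the node is labeled II; `lab v = false` means labeled I.
`rank` witnesses well-foundedness (parents have smaller rank), and
`d v` is the number of II-labeled nodes on the path from the root to `v`. -/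
theorem stmt_6 {V : Type*} [Fintype V] [DecidableEq V]
    (parent : V → Option V) (lab : V → Bool)
    (rank : V → ℕ) (hrank : ∀ v p, parent v = some p → rank p < rank v)
    (hroot : ∀ v, parent v = none → lab v = false)
    (hI : ∀ v, lab v = false →
      (Finset.univ.filter (fun c => parent c = some v ∧ lab c = true)).card ≤ 1)
    (hII : ∀ v, lab v = true →
      (Finset.univ.filter (fun c => parent c = some v ∧ lab c = true)).card ≤ 2)
    (d : V → ℕ)
    (hd0 : ∀ v, parent v = none → d v = (if lab v then 1 else 0))
    (hds : ∀ v p, parent v = some p → d v = d p + (if lab v then 1 else 0))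
    (hd2 : ∀ v, d v ≤ 2) :
    (Finset.univ.filter (fun v => lab v = true)).card ≤
      3 * (Finset.univ.filter (fun v => lab v = false)).card := by
  classical
  set C : V → Finset V := fun w =>
    Finset.univ.filter (fun c => parent c = some w ∧ lab c = true) with hC
  set f : V → V := fun v =>
    (parent v).elim v (fun p => if lab p then (parent p).getD p else p) with hfdef
  set DD := Finset.univ.filter (fun v => lab v = true) with hDD
  set SS := Finset.univ.filter (fun v => lab v = false) with hSS
  have key : ∀ v, lab v = true → ∃ p, parent v = some p ∧
      ((lab p = false ∧ f v = p) ∨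
       (lab p = true ∧ ∃ q, parent p = some q ∧ lab q = false ∧ f v = q)) := by
    intro v hv
    cases hp : parent v with
    | none => exact absurd (hroot v hp) (by simp [hv])
    | some p =>
      refine ⟨p, rfl, ?_⟩
      by_cases hlp : lab p
      · cases hq : parent p with
        | none => exact absurd (hroot p hq) (by simp [hlp])
        | some q =>
          right
          refine ⟨hlp, q, rfl, ?_, ?_⟩
          · by_contra hlq
            have hlq' : lab q = true := by
              cases h : lab q
              · exact absurd h hlq
              · rfl
            have h1 := hds v p hp
            have h2 := hds p q hq
            have h3 : 1 ≤ d q := by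
              cases hr : parent q with
              | none => rw [hd0 q hr, hlq']; simp
              | some r => rw [hds q r hr, hlq']; simp
            have h4 := hd2 v
            rw [h1, h2, hv, hlp] at h4
            simp at h4
            omega
          · simp [hfdef, hp, hlp, hq]
      · left
        exact ⟨by simpa using hlp, by simp [hfdef, hp, hlp]⟩
  have himg : ∀ v ∈ DD, f v ∈ SS := by
    intro v hv
    rw [hDD, Finset.mem_filter] at hv
    obtain ⟨p, hp, hcase⟩ := key v hv.2
    rcases hcase with ⟨h1, h2⟩ | ⟨h1, q, hq, hlq, h2⟩
    · rw [hSS, Finset.mem_filter, h2]; exact ⟨Finset.mem_univ _, h1⟩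
    · rw [hSS, Finset.mem_filter, h2]; exact ⟨Finset.mem_univ _, hlq⟩
  have hfiber : ∀ w ∈ DD.image f, (DD.filter (fun v => f v = w)).card ≤ 3 := by
    intro w hw
    obtain ⟨v0, hv0, hfv0⟩ := Finset.mem_image.mp hw
    have hw' : lab w = false := by
      have := himg v0 hv0
      rw [hSS, Finset.mem_filter, hfv0] at this
      exact this.2
    have hsub : DD.filter (fun v => f v = w) ⊆ C w ∪ (C w).biUnion C := by
      intro v hv
      rw [Finset.mem_filter, hDD, Finset.mem_filter] at hv
      obtain ⟨⟨_, hlv⟩, hfv⟩ := hv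
      obtain ⟨p, hp, hcase⟩ := key v hlv
      rcases hcase with ⟨h1, h2⟩ | ⟨h1, q, hq, hlq, h2⟩
      · apply Finset.mem_union_left
        rw [hC]
        simp only [Finset.mem_filter, Finset.mem_univ, true_and]
        rw [h2] at hfv
        exact ⟨hfv ▸ hp, hlv⟩
      · apply Finset.mem_union_right
        rw [Finset.mem_biUnion]
        refine ⟨p, ?_, ?_⟩
        · rw [hC]
          simp only [Finset.mem_filter, Finset.mem_univ, true_and]
          rw [h2] at hfv
          exact ⟨hfv ▸ hq, h1⟩
        · rw [hC]
          simp only [Finset.mem_filter, Finset.mem_univ, true_and]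
          exact ⟨hp, hlv⟩
    calc (DD.filter (fun v => f v = w)).card
        ≤ (C w ∪ (C w).biUnion C).card := Finset.card_le_card hsub
      _ ≤ (C w).card + ((C w).biUnion C).card := Finset.card_union_le _ _
      _ ≤ (C w).card + ∑ p ∈ C w, (C p).card :=
          Nat.add_le_add_left (Finset.card_biUnion_le) _
      _ ≤ 1 + ∑ p ∈ C w, 2 := by
          apply Nat.add_le_add
          · exact hI w hw'
          · apply Finset.sum_le_sum
            intro p hp
            rw [hC, Finset.mem_filter] at hp
            exact hII p hp.2.2
      _ ≤ 1 + 2 * 1 := by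
          rw [Finset.sum_const, smul_eq_mul]
          have h5 : (C w).card ≤ 1 := hI w hw'
          omega
      _ = 3 := by norm_num
  calc DD.card ≤ 3 * (DD.image f).card := Finset.card_le_mul_card_image _ 3 hfiber
    _ ≤ 3 * SS.card := by
        apply Nat.mul_le_mul_left
        apply Finset.card_le_card
        intro w hw
        obtain ⟨v, hv, hfv⟩ := Finset.mem_image.mp hw
        exact hfv ▸ himg v hv
end

section
/- Let S₁, D₂, Ď₃, D̄₃, D̂₃ be nonnegative real numbers, and for each integer 3 ≤ k ≤ 21 let S₂ᵏ ≥ 0, and for each integer 2 ≤ k ≤ 22 let Š₃ᵏ, S̄₃ᵏ, Ŝ₃ᵏ ≥ 0. Assume: (i) 4S₁ + 2D₂ + ∑_{k=3}^{21} k·S₂ᵏ + 2Ď₃ + 3D̄₃ + 4D̂₃ + ∑_{k=2}^{22}(k·Š₃ᵏ + (k+1)·S̄₃ᵏ + (k+2)·Ŝ₃ᵏ) ≤ 336; (ii) D₂ ≤ 11·x₂ and Ď₃ + (3/2)D̄₃ + 2D̂₃ + ∑_{k=2}^{22}((1/2)S̄₃ᵏ + Ŝ₃ᵏ) ≤ (23/2)·x₃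 for nonnegative reals x₂, x₃ with x₂ + x₃ ≤ 2. Then 4S₁ + 8D₂ + ∑_{k=3}^{21}(k−2)·S₂ᵏ + 12Ď₃ + 16D̄₃ + 23D̂₃ + ∑_{k=2}^{22}(k·Š₃ᵏ + (k+4)·S̄₃ᵏ + (k+11)·Ŝ₃ᵏ) ≤ 566. -/
theorem stmt_13 (S₁ D₂ D₃c D₃b D₃h : ℝ) (S₂ : ℕ → ℝ) (S₃c S₃b S₃h : ℕ → ℝ)
    (x₂ x₃ : ℝ)
    (hS₁ : 0 ≤ S₁) (hD₂ : 0 ≤ D₂) (hD₃c : 0 ≤ D₃c) (hD₃b : 0 ≤ D₃b) (hD₃h : 0 ≤ D₃h)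
    (hS₂ : ∀ k ∈ Finset.Icc (3:ℕ) 21, 0 ≤ S₂ k)
    (hS₃c : ∀ k ∈ Finset.Icc (2:ℕ) 22, 0 ≤ S₃c k)
    (hS₃b : ∀ k ∈ Finset.Icc (2:ℕ) 22, 0 ≤ S₃b k)
    (hS₃h : ∀ k ∈ Finset.Icc (2:ℕ) 22, 0 ≤ S₃h k)
    (hx₂ : 0 ≤ x₂) (hx₃ : 0 ≤ x₃) (hx : x₂ + x₃ ≤ 2)
    (hi : 4 * S₁ + 2 * D₂ + (∑ k ∈ Finset.Icc (3:ℕ) 21, (k : ℝ) * S₂ k)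
        + 2 * D₃c + 3 * D₃b + 4 * D₃h
        + (∑ k ∈ Finset.Icc (2:ℕ) 22,
            ((k : ℝ) * S₃c k + ((k : ℝ) + 1) * S₃b k + ((k : ℝ) + 2) * S₃h k)) ≤ 336)
    (hii₁ : D₂ ≤ 11 * x₂)
    (hii₂ : D₃c + (3/2) * D₃b + 2 * D₃h
        + (∑ k ∈ Finset.Icc (2:ℕ) 22, ((1/2) * S₃b k + S₃h k)) ≤ (23/2) * x₃) :
    4 * S₁ + 8 * D₂ + (∑ k ∈ Finset.Icc (3:ℕ) 21, ((k : ℝ) - 2) * S₂ k)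
      + 12 * D₃c + 16 * D₃b + 23 * D₃h
      + (∑ k ∈ Finset.Icc (2:ℕ) 22,
          ((k : ℝ) * S₃c k + ((k : ℝ) + 4) * S₃b k + ((k : ℝ) + 11) * S₃h k)) ≤ 566 := by
  have h1 : (∑ k ∈ Finset.Icc (3:ℕ) 21, ((k : ℝ) - 2) * S₂ k)
      ≤ ∑ k ∈ Finset.Icc (3:ℕ) 21, (k : ℝ) * S₂ k := by
    apply Finset.sum_le_sum
    intro k hk
    have := hS₂ k hk
    nlinarith
  have h2 : (∑ k ∈ Finset.Icc (2:ℕ) 22,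
        ((k : ℝ) * S₃c k + ((k : ℝ) + 4) * S₃b k + ((k : ℝ) + 11) * S₃h k))
      ≤ (∑ k ∈ Finset.Icc (2:ℕ) 22,
        ((k : ℝ) * S₃c k + ((k : ℝ) + 1) * S₃b k + ((k : ℝ) + 2) * S₃h k))
          + 10 * ∑ k ∈ Finset.Icc (2:ℕ) 22, ((1/2) * S₃b k + S₃h k) := by
    rw [Finset.mul_sum, ← Finset.sum_add_distrib]
    apply Finset.sum_le_sum
    intro k hk
    have hb := hS₃b k hk
    have hh := hS₃h k hk
    nlinarith
  linarith
end
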